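/- arXiv:2111.04055 — 7 statements merged into one kernel-verified Lean document; each statement's English description precedes it below -/
import Mathlib

section
/- If Φ is a self-orthogonal quantum Latin square of dimension d (a d×d array of unit vectors in ℂ^d whose rows and columns are orthonormal bases, and such that the vectors Φ_{i,j} ⊗ Φ_{j,i}* for i,j ∈ [d] form an orthonormal basis of ℂ^d ⊗ ℂ^d), then the diagonal entries {Φ_{i,i} : i ∈ [d]} form an orthonormal basis of ℂ^d. -/
/-!
Comparing the vectors `Φ_{i,i} ⊗ conj Φ_{i,i}` with each other in the self-orthogonality
condition gives `|⟨Φ_{i,i}, Φ_{j,j}⟩|² = δ_{ij}`, so the diagonal is an orthonormal family;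
having `d` members in `ℂ^d`, it is an orthonormal basis.
-/

noncomputable section

/-- The inner product on a complex inner product space, as a function into `ℂ`. -/
def ip {E : Type*} [NormedAddCommGroup E] [InnerProductSpace ℂ E] (x y : E) : ℂ :=
  inner ℂ x y

/-- Entrywise complex conjugation of a vector in `ℂ^ι` (in the standard basis). -/
def conjE {ι : Type*} [Fintype ι] (v : EuclideanSpace ℂ ι) : EuclideanSpace ℂ ι :=
  WithLp.toLp 2 (fun k => star (v k))

/-- A quantum Latin square of dimension `d`: a `d × d` array of vectors in `ℂ^d`
whose rows and columns are orthonormal bases (orthonormal families of `d` vectors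
in the `d`-dimensional space `ℂ^d`). -/
def IsQLS {d : ℕ} (Φ : Fin d → Fin d → EuclideanSpace ℂ (Fin d)) : Prop :=
  (∀ i, Orthonormal ℂ (Φ i)) ∧ (∀ j, Orthonormal ℂ (fun i => Φ i j))

/-- Two `d × d` arrays of vectors are orthogonal quantum Latin squares:
`⟨Φ_{i,j},Φ_{i',j'}⟩⟨Ψ_{i,j},Ψ_{i',j'}⟩ = δ_{ii'}δ_{jj'}`, i.e. the tensor products
`Φ_{i,j} ⊗ Ψ_{i,j}` form an orthonormal basis of `ℂ^d ⊗ ℂ^d`. -/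
def OrthQLS {d : ℕ} (Φ Ψ : Fin d → Fin d → EuclideanSpace ℂ (Fin d)) : Prop :=
  ∀ i j i' j', ip (Φ i j) (Φ i' j') * ip (Ψ i j) (Ψ i' j') =
    if i = i' ∧ j = j' then 1 else 0

/-- A self-orthogonal quantum Latin square: a quantum Latin square that is
orthogonal to its conjugate transpose, i.e.
`⟨Φ_{i,j},Φ_{i',j'}⟩ ⋅ conj ⟨Φ_{j,i},Φ_{j',i'}⟩ = δ_{ii'}δ_{jj'}`
(the vectors `Φ_{i,j} ⊗ conj (Φ_{j,i})` form an orthonormal basis of `ℂ^d ⊗ ℂ^d`). -/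
def IsSOQLS {d : ℕ} (Φ : Fin d → Fin d → EuclideanSpace ℂ (Fin d)) : Prop :=
  IsQLS Φ ∧ OrthQLS Φ (fun i j => conjE (Φ j i))

open Module

section

variable {𝕜 E ι : Type*} [RCLike 𝕜] [NormedAddCommGroup E] [InnerProductSpace 𝕜 E]

theorem orthonormal_of_norm_inner_eq_ite [DecidableEq ι] {v : ι → E}
    (h : ∀ i j, ‖inner 𝕜 (v i) (v j)‖ = if i = j then 1 else 0) : Orthonormal 𝕜 v := by
  rw [orthonormal_iff_ite]
  intro i j
  split_ifs with hij
  · subst hij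
    have hi := h i i
    rw [if_pos rfl, ← inner_self_re_eq_norm, inner_self_eq_norm_sq] at hi
    rw [inner_self_eq_norm_sq_to_K]
    exact_mod_cast hi
  · simpa [hij] using h i j

theorem Orthonormal.exists_orthonormalBasis_of_card_eq_finrank [FiniteDimensional 𝕜 E]
    [Fintype ι] {v : ι → E} (hv : Orthonormal 𝕜 v) (hcard : Fintype.card ι = finrank 𝕜 E) :
    ∃ b : OrthonormalBasis ι 𝕜 E, ⇑b = v :=
  ⟨.mk hv (hv.linearIndependent.span_eq_top_of_card_eq_finrank' hcard).ge,
    OrthonormalBasis.coe_mk _ _⟩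

end

theorem ip_conjE {ι : Type*} [Fintype ι] (x y : EuclideanSpace ℂ ι) :
    ip (conjE x) (conjE y) = star (ip x y) := by
  simp [ip, conjE, PiLp.inner_apply, mul_comm]

theorem OrthQLS.orthonormal_diagonal {d : ℕ} {Φ : Fin d → Fin d → EuclideanSpace ℂ (Fin d)}
    (h : OrthQLS Φ fun i j => conjE (Φ j i)) : Orthonormal ℂ fun i => Φ i i := by
  refine orthonormal_of_norm_inner_eq_ite fun i j => ?_
  have hij : (‖ip (Φ i i) (Φ j j)‖ : ℂ) ^ 2 = if i = j then 1 else 0 := by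
    simpa [ip_conjE, Complex.mul_conj'] using h i i j j
  split_ifs at hij ⊢
  · exact (pow_eq_one_iff_of_nonneg (norm_nonneg _) two_ne_zero).mp (mod_cast hij)
  · exact (pow_eq_zero_iff two_ne_zero).mp (mod_cast hij)

/-- If `Φ` is a self-orthogonal quantum Latin square of dimension `d`, then its
diagonal entries `{Φ_{i,i} : i ∈ [d]}` form an orthonormal basis of `ℂ^d`. -/
theorem soqls_diagonal_orthonormal_basis {d : ℕ}
    (Φ : Fin d → Fin d → EuclideanSpace ℂ (Fin d)) (h : IsSOQLS Φ) :
    ∃ b : OrthonormalBasis (Fin d) ℂ (EuclideanSpace ℂ (Fin d)), ∀ i, b i = Φ i i := by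
  obtain ⟨b, hb⟩ := h.2.orthonormal_diagonal.exists_orthonormalBasis_of_card_eq_finrank (by simp)
  exact ⟨b, congrFun hb⟩
end
end

section
/- There is no self-orthogonal quantum Latin square of dimension 3. -/
noncomputable section

/-!
The diagonal `Φ₀₀, Φ₁₁, Φ₂₂` of a self-orthogonal quantum Latin square of dimension 3 is an
orthonormal basis. The off-diagonal entry `Φ₀₁` is orthogonal to `Φ₀₀` (same row) and to `Φ₁₁`
(same column), and likewise `Φ₁₀`; being unit vectors, each must therefore have a nonzero
component along `Φ₂₂`. This contradicts self-orthogonality at the pair of positions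
`(0,1), (2,2)`, which says `⟨Φ₀₁, Φ₂₂⟩ ⋅ conj ⟨Φ₁₀, Φ₂₂⟩ = 0`.
-/

theorem Orthonormal.eq_zero_of_forall_inner_eq_zero {𝕜 E ι : Type*} [RCLike 𝕜]
    [NormedAddCommGroup E] [InnerProductSpace 𝕜 E] [FiniteDimensional 𝕜 E] [Fintype ι]
    {v : ι → E} (hv : Orthonormal 𝕜 v) (hcard : Fintype.card ι = Module.finrank 𝕜 E) {w : E}
    (hw : ∀ i, inner 𝕜 (v i) w = 0) : w = 0 := by
  refine InnerProductSpace.ext_inner_left_basis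
    (basisOfLinearIndependentOfCardEqFinrank' v hv.linearIndependent hcard) fun i => ?_
  simp [hw i]

theorem ip_conjE_conjE {ι : Type*} [Fintype ι] (x y : EuclideanSpace ℂ ι) :
    ip (conjE x) (conjE y) = starRingEnd ℂ (ip x y) := by
  simp [ip, conjE, PiLp.inner_apply, map_sum, mul_comm]

namespace IsSOQLS

variable {d : ℕ} {Φ : Fin d → Fin d → EuclideanSpace ℂ (Fin d)}

theorem ip_mul_conj_ip (hΦ : IsSOQLS Φ) (i j i' j' : Fin d) :
    ip (Φ i j) (Φ i' j') * starRingEnd ℂ (ip (Φ j i) (Φ j' i')) =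
      if i = i' ∧ j = j' then 1 else 0 := by
  simpa only [ip_conjE_conjE] using hΦ.2 i j i' j'

theorem orthonormal_diag (hΦ : IsSOQLS Φ) : Orthonormal ℂ (fun i => Φ i i) := by
  refine ⟨fun i => (hΦ.1.1 i).1 i, fun i j hij => ?_⟩
  have h := hΦ.ip_mul_conj_ip i i j j
  rwa [if_neg (by tauto), Complex.mul_conj, Complex.ofReal_eq_zero, Complex.normSq_eq_zero] at h

theorem exists_ip_diag_ne_zero (hΦ : IsSOQLS Φ) {i j : Fin d} (hij : i ≠ j) :
    ∃ k, k ≠ i ∧ k ≠ j ∧ ip (Φ i j) (Φ k k) ≠ 0 := by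
  by_contra! h
  have hzero : Φ i j = 0 := by
    refine hΦ.orthonormal_diag.eq_zero_of_forall_inner_eq_zero (by simp) fun k => ?_
    rw [inner_eq_zero_symm]
    by_cases hki : k = i
    · subst hki
      exact (hΦ.1.1 k).2 hij.symm
    by_cases hkj : k = j
    · subst hkj
      exact (hΦ.1.2 k).2 (Ne.symm hki)
    exact h k hki hkj
  simpa [hzero] using (hΦ.1.1 i).1 j

end IsSOQLS

/-- There is no self-orthogonal quantum Latin square of dimension 3. -/
theorem no_soqls_dim_three :
    ¬ ∃ Φ : Fin 3 → Fin 3 → EuclideanSpace ℂ (Fin 3), IsSOQLS Φ := by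
  rintro ⟨Φ, hΦ⟩
  obtain ⟨k, hk0, hk1, hk⟩ := hΦ.exists_ip_diag_ne_zero (i := 0) (j := 1) (by decide)
  obtain ⟨l, hl1, hl0, hl⟩ := hΦ.exists_ip_diag_ne_zero (i := 1) (j := 0) (by decide)
  obtain rfl : k = 2 := by omega
  obtain rfl : l = 2 := by omega
  have h := hΦ.ip_mul_conj_ip 0 1 2 2
  rw [if_neg (by decide)] at h
  exact mul_ne_zero hk ((map_ne_zero _).mpr hl) h
end
end

section
/- If q is a prime power, then there exist q − 1 mutually orthogonal Latin squares of order q; explicitly, for each nonzero a in the finite field F_q, the square L_a(x,y) = a·x + y is a Latin square, and L_a, L_b are orthogonal whenever a ≠ b. -/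
/-- A (classical) Latin square over an index/symbol set `α`: every row and every
column is a bijection of `α`. -/
def IsLatin {α : Type*} (L : α → α → α) : Prop :=
  (∀ i, Function.Bijective (L i)) ∧ (∀ j, Function.Bijective fun i => L i j)

/-- Two Latin squares are orthogonal: superimposing them yields every ordered pair
exactly once. -/
def OrthLatin {α : Type*} (L L' : α → α → α) : Prop :=
  Function.Bijective fun p : α × α => (L p.1 p.2, L' p.1 p.2)

/-- If `q` is a prime power — here: for any finite field `F` — there exist `q - 1`
mutually orthogonal Latin squares of order `q`: explicitly, for every `a ≠ 0` the square
`L_a(x,y) = a·x + y` is a Latin square, and `L_a`, `L_b` are orthogonal whenever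
`a ≠ b` (with `a, b ≠ 0`). -/
theorem field_mols {F : Type*} [Field F] [Fintype F] :
    (∀ a : F, a ≠ 0 → IsLatin (fun x y => a * x + y)) ∧
    (∀ a b : F, a ≠ 0 → b ≠ 0 → a ≠ b →
      OrthLatin (fun x y => a * x + y) (fun x y => b * x + y)) := by
  constructor
  · intro a ha
    constructor
    · intro i
      exact (Equiv.addLeft (a * i)).bijective
    · intro j
      have : Function.Bijective (fun x : F => a * x) :=
        (Equiv.mulLeft₀ a ha).bijective
      exact ((Equiv.addRight j).bijective).comp this
  · intro a b ha hb hab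
    apply Finite.injective_iff_bijective.mp
    rintro ⟨x, y⟩ ⟨x', y'⟩ h
    simp only [Prod.mk.injEq] at h
    obtain ⟨h1, h2⟩ := h
    have hx : x = x' := by
      have : (a - b) * x = (a - b) * x' := by ring_nf; linear_combination h1 - h2
      exact mul_left_cancel₀ (sub_ne_zero.mpr hab) this
    subst hx
    have hy : y = y' := add_left_cancel h1
    subst hy
    rfl
end

section
/- For t ≥ 3, an orthogonal array OA(d³, t+3, d, 3) exists if and only if there exist t Latin cubes of order d that are mutually orthogonal (every three superimpose to give all ordered triples exactly once) and satisfy property (B): every pair of corresponding planes (obtained by fixing one coordinate) of any two of the cubes forms a pair of orthogonal Latin squares. -/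
/-- A (classical) Latin cube of order `d`: fixing any two of the three coordinates
gives a bijection in the remaining one. -/
def IsLatinCube {d : ℕ} (L : Fin d → Fin d → Fin d → Fin d) : Prop :=
  (∀ j k, Function.Bijective fun i => L i j k) ∧
  (∀ i k, Function.Bijective fun j => L i j k) ∧
  (∀ i j, Function.Bijective (L i j))

/-- Three Latin cubes are orthogonal: their superposition is a bijection of `[d]³`. -/
def TripleOrthLC {d : ℕ} (L L' L'' : Fin d → Fin d → Fin d → Fin d) : Prop :=
  Function.Bijective fun p : Fin d × Fin d × Fin d =>
    (L p.1 p.2.1 p.2.2, L' p.1 p.2.1 p.2.2, L'' p.1 p.2.1 p.2.2)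

/-- Property (B) for a pair of Latin cubes: every pair of corresponding planes
(obtained by fixing one coordinate) forms a pair of orthogonal Latin squares. -/
def PlanesOrthLC {d : ℕ} (L L' : Fin d → Fin d → Fin d → Fin d) : Prop :=
  (∀ i, Function.Bijective fun p : Fin d × Fin d => (L i p.1 p.2, L' i p.1 p.2)) ∧
  (∀ j, Function.Bijective fun p : Fin d × Fin d => (L p.1 j p.2, L' p.1 j p.2)) ∧
  (∀ k, Function.Bijective fun p : Fin d × Fin d => (L p.1 p.2 k, L' p.1 p.2 k))

namespace OAmolcAux

variable {d t : ℕ}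

/-- The column function of the orthogonal array built from `t` Latin cubes. -/
def gcol (L : Fin t → Fin d → Fin d → Fin d → Fin d) (c : Fin (t + 3))
    (p : Fin d × Fin d × Fin d) : Fin d :=
  if _h0 : c.val = 0 then p.1
  else if _h1 : c.val = 1 then p.2.1
  else if _h2 : c.val = 2 then p.2.2
  else L ⟨c.val - 3, by have := c.isLt; omega⟩ p.1 p.2.1 p.2.2

lemma gcol0 (L : Fin t → Fin d → Fin d → Fin d → Fin d) {c : Fin (t + 3)}
    (h : c.val = 0) (p : Fin d × Fin d × Fin d) : gcol L c p = p.1 := by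
  unfold gcol; rw [dif_pos h]

lemma gcol1 (L : Fin t → Fin d → Fin d → Fin d → Fin d) {c : Fin (t + 3)}
    (h : c.val = 1) (p : Fin d × Fin d × Fin d) : gcol L c p = p.2.1 := by
  unfold gcol; rw [dif_neg (by omega), dif_pos h]

lemma gcol2 (L : Fin t → Fin d → Fin d → Fin d → Fin d) {c : Fin (t + 3)}
    (h : c.val = 2) (p : Fin d × Fin d × Fin d) : gcol L c p = p.2.2 := by
  unfold gcol; rw [dif_neg (by omega), dif_neg (by omega), dif_pos h]

lemma gcolBig (L : Fin t → Fin d → Fin d → Fin d → Fin d) {c : Fin (t + 3)}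
    (h : 3 ≤ c.val) (p : Fin d × Fin d × Fin d) :
    gcol L c p = L ⟨c.val - 3, by have := c.isLt; omega⟩ p.1 p.2.1 p.2.2 := by
  unfold gcol; rw [dif_neg (by omega), dif_neg (by omega), dif_neg (by omega)]

/-- Key injectivity lemma for sorted columns. -/
lemma key_sorted {L : Fin t → Fin d → Fin d → Fin d → Fin d}
    (hLat : ∀ s, IsLatinCube (L s))
    (hTri : ∀ s₁ s₂ s₃ : Fin t, s₁ ≠ s₂ → s₁ ≠ s₃ → s₂ ≠ s₃ →
        TripleOrthLC (L s₁) (L s₂) (L s₃))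
    (hPl : ∀ s s' : Fin t, s ≠ s' → PlanesOrthLC (L s) (L s'))
    {c₁ c₂ c₃ : Fin (t + 3)} (h12 : c₁.val < c₂.val) (h23 : c₂.val < c₃.val)
    {p q : Fin d × Fin d × Fin d}
    (e₁ : gcol L c₁ p = gcol L c₁ q) (e₂ : gcol L c₂ p = gcol L c₂ q)
    (e₃ : gcol L c₃ p = gcol L c₃ q) : p = q := by
  obtain ⟨p1, p2, p3⟩ := p
  obtain ⟨q1, q2, q3⟩ := q
  rcases Nat.lt_or_ge c₁.val 3 with hc1 | hc1
  · have hc1' : c₁.val = 0 ∨ c₁.val = 1 ∨ c₁.val = 2 := by omega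
    rcases hc1' with h0 | h1 | h2
    · -- c₁ = 0
      rw [gcol0 L h0, gcol0 L h0] at e₁
      have E1 : p1 = q1 := e₁
      subst E1
      rcases Nat.lt_or_ge c₂.val 3 with hc2 | hc2
      · have hc2' : c₂.val = 1 ∨ c₂.val = 2 := by omega
        rcases hc2' with h1 | h2
        · -- c₂ = 1
          rw [gcol1 L h1, gcol1 L h1] at e₂
          have E2 : p2 = q2 := e₂
          subst E2
          rcases Nat.lt_or_ge c₃.val 3 with hc3 | hc3
          · -- c₃ = 2
            have h2 : c₃.val = 2 := by omega
            rw [gcol2 L h2, gcol2 L h2] at e₃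
            have E3 : p3 = q3 := e₃
            rw [E3]
          · -- c₃ is a cube column : Latin in third coordinate
            rw [gcolBig L hc3, gcolBig L hc3] at e₃
            have E3 : p3 = q3 := ((hLat _).2.2 p1 p2).injective e₃
            rw [E3]
        · -- c₂ = 2, c₃ cube : Latin in second coordinate
          rw [gcol2 L h2, gcol2 L h2] at e₂
          have E2 : p3 = q3 := e₂
          subst E2
          have hc3 : 3 ≤ c₃.val := by omega
          rw [gcolBig L hc3, gcolBig L hc3] at e₃
          have E3 : p2 = q2 := ((hLat _).2.1 p1 p3).injective e₃
          rw [E3]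
      · -- c₂, c₃ cube columns : planes orthogonality, first kind
        have hc3 : 3 ≤ c₃.val := by omega
        rw [gcolBig L hc2, gcolBig L hc2] at e₂
        rw [gcolBig L hc3, gcolBig L hc3] at e₃
        have hs : (⟨c₂.val - 3, by have := c₂.isLt; omega⟩ : Fin t) ≠
            ⟨c₃.val - 3, by have := c₃.isLt; omega⟩ :=
          Fin.ne_of_val_ne (by simp; omega)
        have h := ((hPl _ _ hs).1 p1).injective
          (a₁ := (p2, p3)) (a₂ := (q2, q3)) (Prod.ext e₂ e₃)
        rw [show p2 = q2 from congrArg Prod.fst h,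
            show p3 = q3 from congrArg Prod.snd h]
    · -- c₁ = 1, so c₂.val ≥ 2
      rw [gcol1 L h1, gcol1 L h1] at e₁
      have E1 : p2 = q2 := e₁
      subst E1
      rcases Nat.lt_or_ge c₂.val 3 with hc2 | hc2
      · -- c₂ = 2, c₃ cube : Latin in first coordinate
        have h2 : c₂.val = 2 := by omega
        rw [gcol2 L h2, gcol2 L h2] at e₂
        have E2 : p3 = q3 := e₂
        subst E2
        have hc3 : 3 ≤ c₃.val := by omega
        rw [gcolBig L hc3, gcolBig L hc3] at e₃
        have E3 : p1 = q1 := ((hLat _).1 p2 p3).injective e₃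
        rw [E3]
      · -- c₂, c₃ cube : planes orthogonality, second kind
        have hc3 : 3 ≤ c₃.val := by omega
        rw [gcolBig L hc2, gcolBig L hc2] at e₂
        rw [gcolBig L hc3, gcolBig L hc3] at e₃
        have hs : (⟨c₂.val - 3, by have := c₂.isLt; omega⟩ : Fin t) ≠
            ⟨c₃.val - 3, by have := c₃.isLt; omega⟩ :=
          Fin.ne_of_val_ne (by simp; omega)
        have h := ((hPl _ _ hs).2.1 p2).injective
          (a₁ := (p1, p3)) (a₂ := (q1, q3)) (Prod.ext e₂ e₃)
        rw [show p1 = q1 from congrArg Prod.fst h,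
            show p3 = q3 from congrArg Prod.snd h]
    · -- c₁ = 2, c₂, c₃ cube : planes orthogonality, third kind
      rw [gcol2 L h2, gcol2 L h2] at e₁
      have E1 : p3 = q3 := e₁
      subst E1
      have hc2 : 3 ≤ c₂.val := by omega
      have hc3 : 3 ≤ c₃.val := by omega
      rw [gcolBig L hc2, gcolBig L hc2] at e₂
      rw [gcolBig L hc3, gcolBig L hc3] at e₃
      have hs : (⟨c₂.val - 3, by have := c₂.isLt; omega⟩ : Fin t) ≠
          ⟨c₃.val - 3, by have := c₃.isLt; omega⟩ :=
        Fin.ne_of_val_ne (by simp; omega)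
      have h := ((hPl _ _ hs).2.2 p3).injective
        (a₁ := (p1, p2)) (a₂ := (q1, q2)) (Prod.ext e₂ e₃)
      rw [show p1 = q1 from congrArg Prod.fst h,
          show p2 = q2 from congrArg Prod.snd h]
  · -- all three are cube columns : triple orthogonality
    have hc2 : 3 ≤ c₂.val := by omega
    have hc3 : 3 ≤ c₃.val := by omega
    rw [gcolBig L hc1, gcolBig L hc1] at e₁
    rw [gcolBig L hc2, gcolBig L hc2] at e₂
    rw [gcolBig L hc3, gcolBig L hc3] at e₃
    have d12 : (⟨c₁.val - 3, by have := c₁.isLt; omega⟩ : Fin t) ≠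
        ⟨c₂.val - 3, by have := c₂.isLt; omega⟩ := Fin.ne_of_val_ne (by simp; omega)
    have d13 : (⟨c₁.val - 3, by have := c₁.isLt; omega⟩ : Fin t) ≠
        ⟨c₃.val - 3, by have := c₃.isLt; omega⟩ := Fin.ne_of_val_ne (by simp; omega)
    have d23 : (⟨c₂.val - 3, by have := c₂.isLt; omega⟩ : Fin t) ≠
        ⟨c₃.val - 3, by have := c₃.isLt; omega⟩ := Fin.ne_of_val_ne (by simp; omega)
    exact (hTri _ _ _ d12 d13 d23).injective
      (a₁ := (p1, p2, p3)) (a₂ := (q1, q2, q3)) (Prod.ext e₁ (Prod.ext e₂ e₃))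

/-- Key injectivity lemma for arbitrary distinct columns. -/
lemma key {L : Fin t → Fin d → Fin d → Fin d → Fin d}
    (hLat : ∀ s, IsLatinCube (L s))
    (hTri : ∀ s₁ s₂ s₃ : Fin t, s₁ ≠ s₂ → s₁ ≠ s₃ → s₂ ≠ s₃ →
        TripleOrthLC (L s₁) (L s₂) (L s₃))
    (hPl : ∀ s s' : Fin t, s ≠ s' → PlanesOrthLC (L s) (L s'))
    {c₁ c₂ c₃ : Fin (t + 3)} (h12 : c₁ ≠ c₂) (h13 : c₁ ≠ c₃) (h23 : c₂ ≠ c₃)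
    {p q : Fin d × Fin d × Fin d}
    (e₁ : gcol L c₁ p = gcol L c₁ q) (e₂ : gcol L c₂ p = gcol L c₂ q)
    (e₃ : gcol L c₃ p = gcol L c₃ q) : p = q := by
  have h12' : c₁.val ≠ c₂.val := fun h => h12 (Fin.ext h)
  have h13' : c₁.val ≠ c₃.val := fun h => h13 (Fin.ext h)
  have h23' : c₂.val ≠ c₃.val := fun h => h23 (Fin.ext h)
  rcases Nat.lt_or_gt_of_ne h12' with a | a <;>
    rcases Nat.lt_or_gt_of_ne h13' with b | b <;>
      rcases Nat.lt_or_gt_of_ne h23' with c | c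
  · exact key_sorted hLat hTri hPl a c e₁ e₂ e₃
  · exact key_sorted hLat hTri hPl b c e₁ e₃ e₂
  · omega
  · exact key_sorted hLat hTri hPl b a e₃ e₁ e₂
  · exact key_sorted hLat hTri hPl a b e₂ e₁ e₃
  · omega
  · exact key_sorted hLat hTri hPl c b e₂ e₃ e₁
  · exact key_sorted hLat hTri hPl c a e₃ e₂ e₁

end OAmolcAux

set_option maxHeartbeats 1600000 in
open OAmolcAux in
/-- For `t ≥ 3`, an orthogonal array `OA(d³, t+3, d, 3)` exists if and only if there
exist `t` mutually orthogonal Latin cubes of order `d` (every three superimpose to give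
all ordered triples exactly once) satisfying property (B): every pair of corresponding
planes of any two of the cubes is a pair of orthogonal Latin squares. -/
theorem oa_iff_molc {d t : ℕ} (ht : 3 ≤ t) :
    (∃ A : Fin (d ^ 3) → Fin (t + 3) → Fin d,
      ∀ c₁ c₂ c₃ : Fin (t + 3), c₁ ≠ c₂ → c₁ ≠ c₃ → c₂ ≠ c₃ →
        Function.Bijective fun r => (A r c₁, A r c₂, A r c₃)) ↔
    (∃ L : Fin t → Fin d → Fin d → Fin d → Fin d,
      (∀ s, IsLatinCube (L s)) ∧
      (∀ s₁ s₂ s₃ : Fin t, s₁ ≠ s₂ → s₁ ≠ s₃ → s₂ ≠ s₃ →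
        TripleOrthLC (L s₁) (L s₂) (L s₃)) ∧
      (∀ s s' : Fin t, s ≠ s' → PlanesOrthLC (L s) (L s'))) := by
  constructor
  · rintro ⟨A, hA⟩
    set c0 : Fin (t + 3) := ⟨0, by omega⟩ with hc0
    set c1 : Fin (t + 3) := ⟨1, by omega⟩ with hc1
    set c2 : Fin (t + 3) := ⟨2, by omega⟩ with hc2
    have d01 : c0 ≠ c1 := Fin.ne_of_val_ne (by simp [hc0, hc1])
    have d02 : c0 ≠ c2 := Fin.ne_of_val_ne (by simp [hc0, hc2])
    have d12 : c1 ≠ c2 := Fin.ne_of_val_ne (by simp [hc1, hc2])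
    set col : Fin t → Fin (t + 3) := fun s => ⟨s.val + 3, by have := s.isLt; omega⟩
      with hcol
    have dcol0 : ∀ s, c0 ≠ col s := fun s => Fin.ne_of_val_ne (by simp [hc0, hcol])
    have dcol1 : ∀ s, c1 ≠ col s := fun s => Fin.ne_of_val_ne (by simp [hc1, hcol])
    have dcol2 : ∀ s, c2 ≠ col s := fun s => Fin.ne_of_val_ne (by simp [hc2, hcol])
    have dcolcol : ∀ s s' : Fin t, s ≠ s' → col s ≠ col s' := fun s s' h =>
      Fin.ne_of_val_ne (by simp [hcol]; exact fun hv => h (Fin.ext hv))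
    have hb := hA c0 c1 c2 d01 d02 d12
    set E : Fin d × Fin d × Fin d ≃ Fin (d ^ 3) :=
      (Equiv.ofBijective _ hb).symm with hE
    have hEval : ∀ p : Fin d × Fin d × Fin d,
        (A (E p) c0, A (E p) c1, A (E p) c2) = p := fun p =>
      (Equiv.ofBijective _ hb).apply_symm_apply p
    have hE0 : ∀ p, A (E p) c0 = p.1 := fun p => congrArg Prod.fst (hEval p)
    have hE1 : ∀ p, A (E p) c1 = p.2.1 := fun p =>
      congrArg (Prod.fst ∘ Prod.snd) (hEval p)
    have hE2 : ∀ p, A (E p) c2 = p.2.2 := fun p =>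
      congrArg (Prod.snd ∘ Prod.snd) (hEval p)
    -- rows agreeing on three distinct columns are equal
    have rowEq : ∀ {r r' : Fin (d ^ 3)} (a b c : Fin (t + 3)), a ≠ b → a ≠ c → b ≠ c →
        A r a = A r' a → A r b = A r' b → A r c = A r' c → r = r' := by
      intro r r' a b c hab hac hbc h1 h2 h3
      exact (hA a b c hab hac hbc).injective (by rw [h1, h2, h3])
    refine ⟨fun s i j k => A (E (i, j, k)) (col s), ?_, ?_, ?_⟩
    · intro s
      refine ⟨fun j k => ?_, fun i k => ?_, fun i j => ?_⟩
      · rw [← Finite.injective_iff_bijective]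
        intro i i' h
        have hr : E (i, j, k) = E (i', j, k) :=
          rowEq c1 c2 (col s) d12 (dcol1 s) (dcol2 s)
            (by rw [hE1, hE1]) (by rw [hE2, hE2]) h
        have := E.injective hr
        exact congrArg Prod.fst this
      · rw [← Finite.injective_iff_bijective]
        intro j j' h
        have hr : E (i, j, k) = E (i, j', k) :=
          rowEq c0 c2 (col s) d02 (dcol0 s) (dcol2 s)
            (by rw [hE0, hE0]) (by rw [hE2, hE2]) h
        have := E.injective hr
        exact congrArg (Prod.fst ∘ Prod.snd) this
      · rw [← Finite.injective_iff_bijective]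
        intro k k' h
        have hr : E (i, j, k) = E (i, j, k') :=
          rowEq c0 c1 (col s) d01 (dcol0 s) (dcol1 s)
            (by rw [hE0, hE0]) (by rw [hE1, hE1]) h
        have := E.injective hr
        exact congrArg (Prod.snd ∘ Prod.snd) this
    · intro s₁ s₂ s₃ h12 h13 h23
      rw [TripleOrthLC, ← Finite.injective_iff_bijective]
      intro p q h
      simp only [Prod.mk.injEq] at h
      have hr : E (p.1, p.2.1, p.2.2) = E (q.1, q.2.1, q.2.2) :=
        rowEq (col s₁) (col s₂) (col s₃) (dcolcol _ _ h12) (dcolcol _ _ h13)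
          (dcolcol _ _ h23) h.1 h.2.1 h.2.2
      have := E.injective hr
      obtain ⟨p1, p2, p3⟩ := p; obtain ⟨q1, q2, q3⟩ := q
      exact this
    · intro s s' hss
      refine ⟨fun i => ?_, fun j => ?_, fun k => ?_⟩ <;>
        rw [← Finite.injective_iff_bijective] <;> intro p q h <;>
          simp only [Prod.mk.injEq] at h
      · have hr : E (i, p.1, p.2) = E (i, q.1, q.2) :=
          rowEq c0 (col s) (col s') (dcol0 s) (dcol0 s') (dcolcol _ _ hss)
            (by rw [hE0, hE0]) h.1 h.2
        have := E.injective hr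
        obtain ⟨p1, p2⟩ := p; obtain ⟨q1, q2⟩ := q
        simpa using this
      · have hr : E (p.1, j, p.2) = E (q.1, j, q.2) :=
          rowEq c1 (col s) (col s') (dcol1 s) (dcol1 s') (dcolcol _ _ hss)
            (by rw [hE1, hE1]) h.1 h.2
        have := E.injective hr
        obtain ⟨p1, p2⟩ := p; obtain ⟨q1, q2⟩ := q
        simpa using this
      · have hr : E (p.1, p.2, k) = E (q.1, q.2, k) :=
          rowEq c2 (col s) (col s') (dcol2 s) (dcol2 s') (dcolcol _ _ hss)
            (by rw [hE2, hE2]) h.1 h.2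
        have := E.injective hr
        obtain ⟨p1, p2⟩ := p; obtain ⟨q1, q2⟩ := q
        simpa using this
  · rintro ⟨L, hLat, hTri, hPl⟩
    have hcard : Fintype.card (Fin (d ^ 3)) = Fintype.card (Fin d × Fin d × Fin d) := by
      simp [Fintype.card_prod]; ring
    set E : Fin (d ^ 3) ≃ Fin d × Fin d × Fin d := Fintype.equivOfCardEq hcard with hEdef
    refine ⟨fun r c => gcol L c (E r), fun c₁ c₂ c₃ h12 h13 h23 => ?_⟩
    rw [Fintype.bijective_iff_injective_and_card]
    constructor
    · intro r r' h
      simp only [Prod.mk.injEq] at h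
      exact E.injective (key hLat hTri hPl h12 h13 h23 h.1 h.2.1 h.2.2)
    · exact hcard
end

section
/- If a family of d² pure states ψ_{i,j} ∈ (ℂ^d)^{⊗t} forms a t-GMOQLS(d) and each state is fully separable, ψ_{i,j} = ψ¹_{i,j} ⊗ ⋯ ⊗ ψᵗ_{i,j}, then for each s, the array (ψˢ_{i,j}) is a quantum Latin square of dimension d. -/
/-!
Tracing out every factor but `s` of a product of unit vectors `φ¹ ⊗ ⋯ ⊗ φᵗ` leaves the
rank-one matrix `|φˢ⟩⟨φˢ|`, so condition (2) of a GMOQLS says that the rank-one projections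
onto a row (or a column) of `(φˢ_{i,j})` sum to the identity. Unit vectors `v_i` with this
property are orthonormal: Parseval's identity for `v_k` reads
`1 = Σ_i |⟨v_i, v_k⟩|² = 1 + Σ_{i ≠ k} |⟨v_i, v_k⟩|²`.
-/

noncomputable section

/-- The partial trace of `|ψ⟩⟨ψ'|` over the `t - 1` tensor factors other than `m`,
for `ψ, ψ' ∈ (ℂ^d)^{⊗t}` (modelled as `ℂ^{[d]^t}`): a `d × d` matrix acting on the
`m`-th factor. -/
def ptrace1 {t d : ℕ} (m : Fin t) (ψ ψ' : EuclideanSpace ℂ (Fin t → Fin d)) :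
    Matrix (Fin d) (Fin d) ℂ :=
  fun a b => ∑ g : {i : Fin t // i ≠ m} → Fin d,
    ψ (fun i => if h : i = m then a else g ⟨i, h⟩) *
      star (ψ' (fun i => if h : i = m then b else g ⟨i, h⟩))

/-- The partial trace of `|ψ⟩⟨ψ'|` over the `t - 2` tensor factors other than the two
distinct factors `m, m'`: a `d² × d²` matrix acting on the factors `m` and `m'`. -/
def ptrace2 {t d : ℕ} (m m' : Fin t) (ψ ψ' : EuclideanSpace ℂ (Fin t → Fin d)) :
    Matrix (Fin d × Fin d) (Fin d × Fin d) ℂ :=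
  fun a b => ∑ g : {i : Fin t // i ≠ m ∧ i ≠ m'} → Fin d,
    ψ (fun i => if h : i = m then a.1 else if h' : i = m' then a.2 else g ⟨i, h, h'⟩) *
      star (ψ' (fun i => if h : i = m then b.1 else if h' : i = m' then b.2 else
        g ⟨i, h, h'⟩))

/-- A set of generalized mutually orthogonal quantum Latin squares, `t`-GMOQLS(d):
a `d × d` array of states `ψ_{i,j} ∈ (ℂ^d)^{⊗t}` such that
(1) `⟨ψ_{i,j}, ψ_{i',j'}⟩ = δ_{ii'}δ_{jj'}`;
(2) for every subset of `t-1` tensor factors (equivalently, every remaining factor `m`),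
`Σ_i Tr |ψ_{i,j}⟩⟨ψ_{i,j'}| = δ_{jj'} I_d` and `Σ_j Tr |ψ_{i,j}⟩⟨ψ_{i',j}| = δ_{ii'} I_d`;
(3) for every subset of `t-2` factors, `Σ_{i,j} Tr |ψ_{i,j}⟩⟨ψ_{i,j}| = I_{d²}`. -/
def IsGMOQLS {t d : ℕ} (ψ : Fin d → Fin d → EuclideanSpace ℂ (Fin t → Fin d)) : Prop :=
  (∀ i j i' j', ip (ψ i j) (ψ i' j') = if i = i' ∧ j = j' then 1 else 0) ∧
  (∀ m : Fin t, ∀ j j', ∑ i, ptrace1 m (ψ i j) (ψ i j') =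
    if j = j' then (1 : Matrix (Fin d) (Fin d) ℂ) else 0) ∧
  (∀ m : Fin t, ∀ i i', ∑ j, ptrace1 m (ψ i j) (ψ i' j) =
    if i = i' then (1 : Matrix (Fin d) (Fin d) ℂ) else 0) ∧
  (∀ m m' : Fin t, m ≠ m' → ∑ i, ∑ j, ptrace2 m m' (ψ i j) (ψ i j) =
    (1 : Matrix (Fin d × Fin d) (Fin d × Fin d) ℂ))

open Finset Matrix

section Parseval

variable {𝕜 E ι : Type*} [RCLike 𝕜] [NormedAddCommGroup E] [InnerProductSpace 𝕜 E] [Fintype ι]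

theorem sum_norm_inner_sq_eq_norm_sq_of_sum_inner_smul_eq {v : ι → E} {x : E}
    (hx : ∑ i, inner 𝕜 (v i) x • v i = x) : ∑ i, ‖inner 𝕜 (v i) x‖ ^ 2 = ‖x‖ ^ 2 := by
  have h := congrArg (inner 𝕜 x) hx
  simp only [inner_sum, inner_smul_right, inner_self_eq_norm_sq_to_K] at h
  rw [← RCLike.ofReal_inj (K := 𝕜)]
  push_cast
  rw [← h]
  refine sum_congr rfl fun i _ => ?_
  rw [← inner_conj_symm (v i) x, RCLike.conj_mul, RCLike.norm_conj]

theorem orthonormal_of_sum_inner_smul_eq {v : ι → E} (hv : ∀ i, ‖v i‖ = 1)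
    (hres : ∀ x, ∑ i, inner 𝕜 (v i) x • v i = x) : Orthonormal 𝕜 v := by
  classical
  refine ⟨hv, fun k l hkl => ?_⟩
  have hparseval := sum_norm_inner_sq_eq_norm_sq_of_sum_inner_smul_eq (hres (v l))
  rw [← add_sum_erase _ _ (mem_univ l), hv, inner_self_eq_norm_sq_to_K, hv] at hparseval
  have hzero : ∀ i ∈ univ.erase l, ‖inner 𝕜 (v i) (v l)‖ ^ 2 = 0 :=
    (sum_eq_zero_iff_of_nonneg fun _ _ => by positivity).1 (by simpa using hparseval)
  simpa using hzero k (mem_erase.2 ⟨hkl, mem_univ k⟩)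

end Parseval

section Euclidean

variable {𝕜 ι n : Type*} [RCLike 𝕜] [Fintype ι] [Fintype n] [DecidableEq n]

theorem sum_inner_smul_eq_of_sum_vecMulVec_eq_one {v : ι → EuclideanSpace 𝕜 n}
    (hv : ∑ i, vecMulVec (v i) (star (v i)) = 1) (x : EuclideanSpace 𝕜 n) :
    ∑ i, inner 𝕜 (v i) x • v i = x := by
  ext a
  have hx := congrFun (congrArg (· *ᵥ (x : n → 𝕜)) hv) a
  simp only [one_mulVec, sum_mulVec, vecMulVec_mulVec, Finset.sum_apply] at hx
  simp [PiLp.inner_apply, ← hx, dotProduct, mul_comm]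

theorem orthonormal_of_sum_vecMulVec_eq_one {v : ι → EuclideanSpace 𝕜 n}
    (hv : ∀ i, ‖v i‖ = 1) (hsum : ∑ i, vecMulVec (v i) (star (v i)) = 1) :
    Orthonormal 𝕜 v :=
  orthonormal_of_sum_inner_smul_eq hv (sum_inner_smul_eq_of_sum_vecMulVec_eq_one hsum)

end Euclidean

theorem Fintype.prod_dite_eq_mul_prod_subtype_ne {α κ M : Type*} [Fintype α] [DecidableEq α]
    [CommMonoid M] (f : α → κ → M) (a : α) (c : κ) (g : {i // i ≠ a} → κ) :
    ∏ i, f i (if h : i = a then c else g ⟨i, h⟩) = f a c * ∏ i : {i // i ≠ a}, f i (g i) := by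
  rw [Fintype.prod_eq_mul_prod_subtype_ne _ a, dif_pos rfl]
  congr 1
  exact Fintype.prod_congr _ _ fun i => by rw [dif_neg i.2]

section PartialTrace

variable {t d : ℕ}

theorem ptrace1_toLp_prod (m : Fin t) (v w : Fin t → EuclideanSpace ℂ (Fin d)) :
    ptrace1 m (WithLp.toLp 2 fun f => ∏ s, v s (f s)) (WithLp.toLp 2 fun f => ∏ s, w s (f s)) =
      (∏ s : {s // s ≠ m}, inner ℂ (w s) (v s)) • vecMulVec (v m) (star (w m)) := by
  ext a b
  have hfactor : ∀ s : Fin t, inner ℂ (w s) (v s) = ∑ x, v s x * star (w s x) := fun s => by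
    simp [PiLp.inner_apply]
  simp only [ptrace1, Fintype.prod_dite_eq_mul_prod_subtype_ne, hfactor, Fintype.prod_sum,
    Matrix.smul_apply, vecMulVec_apply, smul_eq_mul, sum_mul, star_mul', star_prod,
    prod_mul_distrib]
  exact sum_congr rfl fun g _ => by rw [Pi.star_apply]; ring

theorem ptrace1_toLp_prod_self (m : Fin t) (v : Fin t → EuclideanSpace ℂ (Fin d))
    (hv : ∀ s ≠ m, ‖v s‖ = 1) :
    ptrace1 m (WithLp.toLp 2 fun f => ∏ s, v s (f s)) (WithLp.toLp 2 fun f => ∏ s, v s (f s)) =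
      vecMulVec (v m) (star (v m)) := by
  rw [ptrace1_toLp_prod, prod_eq_one fun s _ => ?_, one_smul]
  rw [inner_self_eq_norm_sq_to_K, hv s s.2, RCLike.ofReal_one, one_pow]

end PartialTrace

/-- If a `t`-GMOQLS(d) consists of fully separable states
`ψ_{i,j} = ψ¹_{i,j} ⊗ ⋯ ⊗ ψᵗ_{i,j}` (each factor a unit vector), then for each `s` the
array `(ψˢ_{i,j})` is a quantum Latin square of dimension `d`. -/
theorem gmoqls_separable_factors_are_qls {t d : ℕ}
    (ψ : Fin d → Fin d → EuclideanSpace ℂ (Fin t → Fin d))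
    (φ : Fin t → Fin d → Fin d → EuclideanSpace ℂ (Fin d))
    (hsep : ∀ i j, ψ i j = WithLp.toLp 2 (fun f => ∏ s, φ s i j (f s)))
    (hunit : ∀ s i j, ‖φ s i j‖ = 1)
    (h : IsGMOQLS ψ) :
    ∀ s, IsQLS (φ s) := by
  intro s
  have hmarginal : ∀ i j, ptrace1 s (ψ i j) (ψ i j) = vecMulVec (φ s i j) (star (φ s i j)) :=
    fun i j => by rw [hsep]; exact ptrace1_toLp_prod_self s _ fun s' _ => hunit s' i j
  refine ⟨fun i => orthonormal_of_sum_vecMulVec_eq_one (hunit s i) ?_,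
    fun j => orthonormal_of_sum_vecMulVec_eq_one (hunit s · j) ?_⟩
  · simpa [hmarginal] using h.2.2.1 s i i
  · simpa [hmarginal] using h.2.1 s j j
end
end

section
/- There is a bijective correspondence between quantum orthogonal arrays QOA(d², t+2, d, 2) whose first two subsystems are classical registers (i.e., the total state is Σ_{i,j} |ij⟩ ⊗ Φ_{i,j}) and t-GMOQLS(d): the reduced state on any pair of subsystems S of the (t+2)-partite state Σ_{i,j}|ij⟩⊗Φ_{i,j} is maximally mixed (equal to I_{d²}) for all S with |S|=2 if and only if the array (Φ_{i,j}) satisfies the three defining conditions of a t-GMOQLS(d). -/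
noncomputable section

/-- The amplitude of the `(t+2)`-partite state `|Φ⟩ = Σ_{i,j} |i⟩⊗|j⟩⊗|Φ_{i,j}⟩` at the
configuration `c : Fin (t+2) → Fin d` (the first two parties are classical registers
holding `i` and `j`). -/
def amp {t d : ℕ} (Φ : Fin d → Fin d → EuclideanSpace ℂ (Fin t → Fin d))
    (c : Fin (t + 2) → Fin d) : ℂ :=
  Φ (c 0) (c 1) (fun s => c s.succ.succ)

/-- The reduced density matrix of `|Φ⟩ = Σ_{i,j} |ij⟩⊗Φ_{i,j}` on the pair of parties
`{p, q}` of the `t+2` parties, as a `d² × d²` matrix. -/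
def rho2 {t d : ℕ} (Φ : Fin d → Fin d → EuclideanSpace ℂ (Fin t → Fin d))
    (p q : Fin (t + 2)) : Matrix (Fin d × Fin d) (Fin d × Fin d) ℂ :=
  fun a b => ∑ g : {r : Fin (t + 2) // r ≠ p ∧ r ≠ q} → Fin d,
    amp Φ (fun r => if h : r = p then a.1 else if h' : r = q then a.2 else g ⟨r, h, h'⟩) *
      star (amp Φ
        (fun r => if h : r = p then b.1 else if h' : r = q then b.2 else g ⟨r, h, h'⟩))

/-! With the first two parties classical, a configuration of the `t + 2` parties is a triple
`(i, j, f)`, `f` a configuration of the `t` quantum factors, so each two-party reduction of `|Φ⟩`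
is assembled from the `Φ_{i,j}`: on the two classical parties it is the transposed Gram matrix
of the family `Φ_{i,j}` (the identity iff the family is orthonormal); on a classical party and
the quantum factor `m` it is the block matrix with blocks `Σ_j ptrace1 m Φ_{i,j} Φ_{i',j}`
(resp. `Σ_i ptrace1 m Φ_{i,j} Φ_{i,j'}`); on two quantum factors it is
`Σ_{i,j} ptrace2 m m' Φ_{i,j} Φ_{i,j}`. Swapping the two parties only conjugates the reduction
by the swap of the two tensor factors, so unordered pairs suffice.
-/

open Finset Function Matrix

section Extend

variable {ι α R : Type*} [Fintype ι] [DecidableEq ι] [Fintype α] [DecidableEq α]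
  [AddCommMonoid R]

theorem sum_extend_eq_sum_filter (m : ι) (a b : α) (F : (ι → α) → (ι → α) → R) :
    ∑ g : {i // i ≠ m} → α,
        F (fun i => if h : i = m then a else g ⟨i, h⟩) (fun i => if h : i = m then b else g ⟨i, h⟩)
      = ∑ c with c m = a, F c (update c m b) := by
  refine sum_nbij' (fun g i => if h : i = m then a else g ⟨i, h⟩) (fun c i => c i)
    (by simp) (by simp) (fun g _ => ?_) (fun c hc => ?_) (fun g _ => ?_)
  · funext i
    simp [i.2]
  · funext i
    simp only [mem_filter, mem_univ, true_and] at hc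
    by_cases h : i = m <;> simp [h, hc]
  · congr 1
    funext i
    by_cases h : i = m <;> simp [h]

theorem sum_extend₂_eq_sum_filter {p q : ι} (hpq : p ≠ q) (a b : α × α)
    (F : (ι → α) → (ι → α) → R) :
    ∑ g : {r // r ≠ p ∧ r ≠ q} → α,
        F (fun r => if h : r = p then a.1 else if h' : r = q then a.2 else g ⟨r, h, h'⟩)
          (fun r => if h : r = p then b.1 else if h' : r = q then b.2 else g ⟨r, h, h'⟩)
      = ∑ c with c p = a.1 ∧ c q = a.2, F c (update (update c p b.1) q b.2) := by
  refine sum_nbij'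
    (fun g r => if h : r = p then a.1 else if h' : r = q then a.2 else g ⟨r, h, h'⟩)
    (fun c r => c r) (by simp [hpq.symm]) (by simp) (fun g _ => ?_) (fun c hc => ?_)
    (fun g _ => ?_)
  · funext r
    simp [r.2.1, r.2.2]
  · funext r
    simp only [mem_filter, mem_univ, true_and] at hc
    by_cases h : r = p
    · simp [h, hc]
    by_cases h' : r = q <;> simp [h, h', hc, hpq.symm]
  · congr 1
    funext r
    by_cases h : r = p
    · simp [h, hpq]
    by_cases h' : r = q <;> simp [h, h', hpq.symm]

end Extend

theorem Fintype.sum_fin_succ_pi {α R : Type*} [Fintype α] [AddCommMonoid R] {n : ℕ}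
    (F : (Fin (n + 1) → α) → R) :
    ∑ c, F c = ∑ x, ∑ f, F (Fin.cons x f) := by
  rw [← Fintype.sum_prod_type']
  exact (Fintype.sum_equiv (Fin.consEquiv fun _ => α) _ _ fun _ => rfl).symm

@[simp]
theorem Fin.update_cons_cons_one {n : ℕ} {α : Type*} (x y z : α) (f : Fin n → α) :
    update (cons x (cons y f) : Fin (n + 2) → α) 1 z = cons x (cons z f) := by
  rw [← succ_zero_eq_one, ← cons_update, update_cons_zero]

theorem Fin.forall_ne_iff_of_symm {n : ℕ} {P : Fin (n + 2) → Fin (n + 2) → Prop}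
    (hP : ∀ p q, p ≠ q → P p q → P q p) :
    (∀ p q, p ≠ q → P p q) ↔ P 0 1 ∧ (∀ m : Fin n, P 1 m.succ.succ) ∧
      (∀ m : Fin n, P 0 m.succ.succ) ∧ ∀ m m' : Fin n, m ≠ m' → P m.succ.succ m'.succ.succ := by
  refine ⟨fun h => ⟨h _ _ zero_ne_one, fun m => h _ _ (succ_succ_ne_one m).symm,
    fun m => h _ _ (succ_ne_zero _).symm, fun m m' hm => h _ _ (by simpa using hm)⟩, ?_⟩
  rintro ⟨h01, h1, h0, hss⟩ p q hpq
  have cases (r : Fin (n + 2)) : r = 0 ∨ r = 1 ∨ ∃ m : Fin n, r = m.succ.succ := by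
    rcases eq_zero_or_eq_succ r with rfl | ⟨r, rfl⟩
    · exact .inl rfl
    rcases eq_zero_or_eq_succ r with rfl | ⟨m, rfl⟩
    · exact .inr (.inl rfl)
    · exact .inr (.inr ⟨m, rfl⟩)
  rcases cases p with rfl | rfl | ⟨m, rfl⟩ <;> rcases cases q with rfl | rfl | ⟨m', rfl⟩
  · exact absurd rfl hpq
  · exact h01
  · exact h0 m'
  · exact hP _ _ zero_ne_one h01
  · exact absurd rfl hpq
  · exact h1 m'
  · exact hP _ _ (succ_ne_zero _).symm (h0 m)
  · exact hP _ _ (succ_succ_ne_one m).symm (h1 m)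
  · exact hss m m' (by rintro rfl; exact hpq rfl)

theorem Matrix.of_blocks_eq_one_iff {α β R : Type*} [DecidableEq α] [DecidableEq β] [Zero R]
    [One R] (N : α → α → Matrix β β R) :
    (of fun a b : α × β => N a.1 b.1 a.2 b.2) = 1 ↔ ∀ i i', N i i' = if i = i' then 1 else 0 := by
  rw [← Matrix.ext_iff]
  simp only [of_apply, one_apply, Prod.forall, Prod.mk.injEq, ite_and]
  constructor
  · intro h i i'
    ext x y
    rw [h]
    split_ifs <;> simp_all [one_apply]
  · intro h i x i' y
    rw [h]
    split_ifs <;> simp_all [one_apply]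

theorem ptrace1_apply_eq_sum_filter {t d : ℕ} (m : Fin t)
    (ψ ψ' : EuclideanSpace ℂ (Fin t → Fin d)) (a b : Fin d) :
    ptrace1 m ψ ψ' a b = ∑ f with f m = a, ψ f * star (ψ' (update f m b)) :=
  sum_extend_eq_sum_filter m a b fun f f' => ψ f * star (ψ' f')

theorem ptrace2_apply_eq_sum_filter {t d : ℕ} {m m' : Fin t} (hm : m ≠ m')
    (ψ ψ' : EuclideanSpace ℂ (Fin t → Fin d)) (a b : Fin d × Fin d) :
    ptrace2 m m' ψ ψ' a b
      = ∑ f with f m = a.1 ∧ f m' = a.2, ψ f * star (ψ' (update (update f m b.1) m' b.2)) :=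
  sum_extend₂_eq_sum_filter hm a b fun f f' => ψ f * star (ψ' f')

section Reduction

variable {t d : ℕ} (Φ : Fin d → Fin d → EuclideanSpace ℂ (Fin t → Fin d))

@[simp]
theorem amp_cons_cons (i j : Fin d) (f : Fin t → Fin d) :
    amp Φ (Fin.cons i (Fin.cons j f)) = Φ i j f := rfl

theorem rho2_apply_eq_sum_filter {p q : Fin (t + 2)} (hpq : p ≠ q) (a b : Fin d × Fin d) :
    rho2 Φ p q a b = ∑ c with c p = a.1 ∧ c q = a.2,
      amp Φ c * star (amp Φ (update (update c p b.1) q b.2)) :=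
  sum_extend₂_eq_sum_filter hpq a b fun c c' => amp Φ c * star (amp Φ c')

theorem rho2_comm {p q : Fin (t + 2)} (hpq : p ≠ q) :
    rho2 Φ q p = (rho2 Φ p q).submatrix (Equiv.prodComm _ _) (Equiv.prodComm _ _) := by
  ext a b
  simp only [submatrix_apply, rho2_apply_eq_sum_filter Φ hpq,
    rho2_apply_eq_sum_filter Φ hpq.symm, Equiv.prodComm_apply, Prod.fst_swap, Prod.snd_swap,
    and_comm, update_comm hpq.symm]

theorem rho2_comm_eq_one {p q : Fin (t + 2)} (hpq : p ≠ q) (h : rho2 Φ p q = 1) :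
    rho2 Φ q p = 1 := by
  rw [rho2_comm Φ hpq, h, submatrix_one_equiv]

theorem rho2_zero_one : rho2 Φ 0 1 = (gram ℂ fun a : Fin d × Fin d => Φ a.1 a.2)ᵀ := by
  ext a b
  rw [rho2_apply_eq_sum_filter Φ zero_ne_one, sum_filter, Fintype.sum_fin_succ_pi]
  simp [Fintype.sum_fin_succ_pi, gram, PiLp.inner_apply, ite_and]

theorem rho2_zero_succ_succ (m : Fin t) :
    rho2 Φ 0 m.succ.succ = of fun a b => (∑ j, ptrace1 m (Φ a.1 j) (Φ b.1 j)) a.2 b.2 := by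
  ext a b
  rw [rho2_apply_eq_sum_filter Φ (Fin.succ_ne_zero _).symm, sum_filter,
    Fintype.sum_fin_succ_pi]
  simp only [Matrix.sum_apply, of_apply, ptrace1_apply_eq_sum_filter, sum_filter]
  simp [Fintype.sum_fin_succ_pi, ite_and, ← Fin.cons_update]

theorem rho2_one_succ_succ (m : Fin t) :
    rho2 Φ 1 m.succ.succ = of fun a b => (∑ i, ptrace1 m (Φ i a.1) (Φ i b.1)) a.2 b.2 := by
  ext a b
  rw [rho2_apply_eq_sum_filter Φ (Fin.succ_succ_ne_one _).symm, sum_filter,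
    Fintype.sum_fin_succ_pi]
  simp only [Matrix.sum_apply, of_apply, ptrace1_apply_eq_sum_filter, sum_filter]
  simp [Fintype.sum_fin_succ_pi, ite_and, ← Fin.cons_update]

theorem rho2_succ_succ {m m' : Fin t} (hm : m ≠ m') :
    rho2 Φ m.succ.succ m'.succ.succ = ∑ i, ∑ j, ptrace2 m m' (Φ i j) (Φ i j) := by
  ext a b
  rw [rho2_apply_eq_sum_filter Φ (by simpa using hm), sum_filter, Fintype.sum_fin_succ_pi]
  simp only [Matrix.sum_apply, ptrace2_apply_eq_sum_filter hm, sum_filter]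
  simp [Fintype.sum_fin_succ_pi, ite_and, ← Fin.cons_update]

theorem rho2_zero_one_eq_one_iff :
    rho2 Φ 0 1 = 1 ↔ ∀ i j i' j', ip (Φ i j) (Φ i' j') = if i = i' ∧ j = j' then 1 else 0 := by
  rw [rho2_zero_one, transpose_eq_one, gram_eq_one_iff_orthonormal, orthonormal_iff_ite]
  simp only [Prod.forall, Prod.mk.injEq, ip]

theorem rho2_zero_succ_succ_eq_one_iff (m : Fin t) :
    rho2 Φ 0 m.succ.succ = 1 ↔
      ∀ i i', ∑ j, ptrace1 m (Φ i j) (Φ i' j) = if i = i' then 1 else 0 := by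
  rw [rho2_zero_succ_succ]
  exact of_blocks_eq_one_iff fun i i' => ∑ j, ptrace1 m (Φ i j) (Φ i' j)

theorem rho2_one_succ_succ_eq_one_iff (m : Fin t) :
    rho2 Φ 1 m.succ.succ = 1 ↔
      ∀ j j', ∑ i, ptrace1 m (Φ i j) (Φ i j') = if j = j' then 1 else 0 := by
  rw [rho2_one_succ_succ]
  exact of_blocks_eq_one_iff fun j j' => ∑ i, ptrace1 m (Φ i j) (Φ i j')

end Reduction

/-- Correspondence between quantum orthogonal arrays `QOA(d², t+2, d, 2)` whose first
two subsystems are classical registers, `|Φ⟩ = Σ_{i,j} |ij⟩ ⊗ Φ_{i,j}`, and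
`t`-GMOQLS(d): the reduction of `|Φ⟩` to any two of the `t+2` parties is maximally
mixed (equals `I_{d²}`) if and only if the array `(Φ_{i,j})` satisfies the three
defining conditions of a `t`-GMOQLS(d). -/
theorem qoa_iff_gmoqls {t d : ℕ}
    (Φ : Fin d → Fin d → EuclideanSpace ℂ (Fin t → Fin d)) :
    (∀ p q : Fin (t + 2), p ≠ q →
      rho2 Φ p q = (1 : Matrix (Fin d × Fin d) (Fin d × Fin d) ℂ)) ↔
    IsGMOQLS Φ := by
  rw [Fin.forall_ne_iff_of_symm fun p q => rho2_comm_eq_one Φ, rho2_zero_one_eq_one_iff]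
  simp only [rho2_one_succ_succ_eq_one_iff, rho2_zero_succ_succ_eq_one_iff]
  refine and_congr_right' (and_congr_right' (and_congr_right' ?_))
  exact forall₃_congr fun m m' hm => by rw [rho2_succ_succ Φ hm]
end
end

section
/- If three quantum Latin cubes Φ, Ψ, Υ of dimension d are composed entirely of standard basis vectors (i.e., come from classical Latin cubes) and are orthogonal as quantum Latin cubes, then the underlying classical Latin cubes are orthogonal (their superposition map [d]³ → [d]³ is a bijection) and satisfy property (B). -/
noncomputable section

/-- A quantum Latin cube over index set `ι` with values in the Hilbert space `E`:
every line (fixing two of the three indices) is an orthonormal basis. -/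
def IsQLCOn {ι : Type*} {E : Type*} [NormedAddCommGroup E] [InnerProductSpace ℂ E]
    (Φ : ι → ι → ι → E) : Prop :=
  (∀ j k, Orthonormal ℂ fun i => Φ i j k) ∧
  (∀ i k, Orthonormal ℂ fun j => Φ i j k) ∧
  (∀ i j, Orthonormal ℂ (Φ i j))

/-- For each fixed value of one of the three indices, the corresponding planes of the
two cubes form a pair of orthogonal quantum Latin squares. -/
def PlanesOrth {ι : Type*} [DecidableEq ι] {E : Type*} [NormedAddCommGroup E]
    [InnerProductSpace ℂ E] (Φ Ψ : ι → ι → ι → E) : Prop :=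
  (∀ i, ∀ j k j' k', ip (Φ i j k) (Φ i j' k') * ip (Ψ i j k) (Ψ i j' k') =
    if j = j' ∧ k = k' then 1 else 0) ∧
  (∀ j, ∀ i k i' k', ip (Φ i j k) (Φ i' j k') * ip (Ψ i j k) (Ψ i' j k') =
    if i = i' ∧ k = k' then 1 else 0) ∧
  (∀ k, ∀ i j i' j', ip (Φ i j k) (Φ i' j' k) * ip (Ψ i j k) (Ψ i' j' k) =
    if i = i' ∧ j = j' then 1 else 0)

/-- Three quantum Latin cubes are orthogonal: (1) the triple tensor products over all
cells form an orthonormal basis of `E ⊗ E ⊗ E`, expressed via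
`⟨Φ,Φ'⟩⟨Ψ,Ψ'⟩⟨Υ,Υ'⟩ = δ_{ii'}δ_{jj'}δ_{kk'}`; and (2) every pair of corresponding
planes of any two of the cubes is a pair of orthogonal quantum Latin squares. -/
def TripleOrthQLC {ι : Type*} [DecidableEq ι] {E : Type*} [NormedAddCommGroup E]
    [InnerProductSpace ℂ E] (Φ Ψ Υ : ι → ι → ι → E) : Prop :=
  (∀ i j k i' j' k',
    ip (Φ i j k) (Φ i' j' k') * ip (Ψ i j k) (Ψ i' j' k') * ip (Υ i j k) (Υ i' j' k') =
      if i = i' ∧ j = j' ∧ k = k' then 1 else 0) ∧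
  PlanesOrth Φ Ψ ∧ PlanesOrth Φ Υ ∧ PlanesOrth Ψ Υ

/-! A cube of standard basis vectors has `⟨|a⟩, |b⟩⟩ = δ_{ab}`, so if two cells carry the same
symbols the left-hand side of each orthogonality relation is `1`; the relation then forces the two
cells to coincide. This makes every superposition map injective, hence bijective on the finite
set of cells. -/

section StandardBasis

variable {ι : Type*} [Fintype ι] [DecidableEq ι] {α : Type*} [DecidableEq α]

lemma ip_single_one_self (a : ι) :
    ip (EuclideanSpace.single a (1 : ℂ)) (EuclideanSpace.single a (1 : ℂ)) = 1 := by
  simp [ip]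

lemma injective_pair_of_ip_single_mul_eq_ite (f g : α → ι)
    (h : ∀ p q, ip (EuclideanSpace.single (f p) (1 : ℂ)) (EuclideanSpace.single (f q) 1) *
      ip (EuclideanSpace.single (g p) (1 : ℂ)) (EuclideanSpace.single (g q) 1) =
        if p = q then 1 else 0) :
    Function.Injective fun p => (f p, g p) := by
  intro p q hpq
  obtain ⟨hf, hg⟩ := Prod.mk.inj hpq
  have hpq' := h p q
  rw [hf, hg, ip_single_one_self, ip_single_one_self, one_mul] at hpq'
  exact one_ne_zero.ite_eq_left_iff.mp hpq'.symm

lemma injective_triple_of_ip_single_mul_mul_eq_ite (f g k : α → ι)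
    (h : ∀ p q, ip (EuclideanSpace.single (f p) (1 : ℂ)) (EuclideanSpace.single (f q) 1) *
      ip (EuclideanSpace.single (g p) (1 : ℂ)) (EuclideanSpace.single (g q) 1) *
      ip (EuclideanSpace.single (k p) (1 : ℂ)) (EuclideanSpace.single (k q) 1) =
        if p = q then 1 else 0) :
    Function.Injective fun p => (f p, g p, k p) := by
  intro p q hpq
  obtain ⟨hf, hgk⟩ := Prod.mk.inj hpq
  obtain ⟨hg, hk⟩ := Prod.mk.inj hgk
  have hpq' := h p q
  rw [hf, hg, hk, ip_single_one_self, ip_single_one_self, ip_single_one_self, one_mul,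
    one_mul] at hpq'
  exact one_ne_zero.ite_eq_left_iff.mp hpq'.symm

end StandardBasis

section LatinCube

variable {d : ℕ}

theorem PlanesOrthLC.of_planesOrth_single {A B : Fin d → Fin d → Fin d → Fin d}
    (h : PlanesOrth (fun i j k => EuclideanSpace.single (A i j k) (1 : ℂ))
      (fun i j k => EuclideanSpace.single (B i j k) (1 : ℂ))) :
    PlanesOrthLC A B := by
  obtain ⟨h₁, h₂, h₃⟩ := h
  refine ⟨fun i => ?_, fun j => ?_, fun k => ?_⟩ <;>
    refine Finite.injective_iff_bijective.mp
      (injective_pair_of_ip_single_mul_eq_ite _ _ fun p q => ?_)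
  · simpa only [Prod.ext_iff] using h₁ i p.1 p.2 q.1 q.2
  · simpa only [Prod.ext_iff] using h₂ j p.1 p.2 q.1 q.2
  · simpa only [Prod.ext_iff] using h₃ k p.1 p.2 q.1 q.2

theorem TripleOrthLC.of_tripleOrthQLC_single {L M N : Fin d → Fin d → Fin d → Fin d}
    (h : TripleOrthQLC
      (fun i j k => EuclideanSpace.single (L i j k) (1 : ℂ))
      (fun i j k => EuclideanSpace.single (M i j k) (1 : ℂ))
      (fun i j k => EuclideanSpace.single (N i j k) (1 : ℂ))) :
    TripleOrthLC L M N :=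
  Finite.injective_iff_bijective.mp <|
    injective_triple_of_ip_single_mul_mul_eq_ite _ _ _ fun p q => by
      simpa only [Prod.ext_iff] using h.1 p.1 p.2.1 p.2.2 q.1 q.2.1 q.2.2

end LatinCube

theorem classical_qlc_orth_implies_classical_orth_general {d : ℕ}
    (L M N : Fin d → Fin d → Fin d → Fin d)
    (h : TripleOrthQLC
      (fun i j k => EuclideanSpace.single (L i j k) (1 : ℂ))
      (fun i j k => EuclideanSpace.single (M i j k) (1 : ℂ))
      (fun i j k => EuclideanSpace.single (N i j k) (1 : ℂ))) :
    TripleOrthLC L M N ∧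
      PlanesOrthLC L M ∧ PlanesOrthLC L N ∧ PlanesOrthLC M N :=
  ⟨.of_tripleOrthQLC_single h, .of_planesOrth_single h.2.1, .of_planesOrth_single h.2.2.1,
    .of_planesOrth_single h.2.2.2⟩

/-- If three quantum Latin cubes built from classical Latin cubes (entries are the
standard basis vectors `|L(i,j,k)⟩`) are orthogonal as quantum Latin cubes, then the
underlying classical Latin cubes are orthogonal and satisfy property (B). -/
theorem classical_qlc_orth_implies_classical_orth {d : ℕ}
    (L M N : Fin d → Fin d → Fin d → Fin d)
    (hL : IsLatinCube L) (hM : IsLatinCube M) (hN : IsLatinCube N)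
    (h : TripleOrthQLC
      (fun i j k => EuclideanSpace.single (L i j k) (1 : ℂ))
      (fun i j k => EuclideanSpace.single (M i j k) (1 : ℂ))
      (fun i j k => EuclideanSpace.single (N i j k) (1 : ℂ))) :
    TripleOrthLC L M N ∧
      PlanesOrthLC L M ∧ PlanesOrthLC L N ∧ PlanesOrthLC M N :=
  classical_qlc_orth_implies_classical_orth_general L M N h
end
end
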